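/- arXiv:1502.01381 — 4 statements merged into one kernel-verified Lean document; each statement's English description precedes it below -/
import Mathlib

section
/- Let $k$ be a field of characteristic $p>0$, let $F/k$ be a field extension in which $k$ is purely inseparably closed (i.e., every $x \in F$ with $x^p \in k$ lies in $k$), and let $k'/k$ be a purely inseparable field extension of degree $p$. Then the ring $F \otimes_k k'$ is a field. -/
/-!
A purely inseparable extension `k'/k` of prime degree `p` is `k[y]` with minimal polynomial
`X ^ p - c`, so `F ⊗[k] k' ≅ F[X] ⧸ (X ^ p - c)`. Since `c` is not a `p`-th power in `k`, and `k`
is purely inseparably closed in `F`, it is not a `p`-th power in `F` either; hence `X ^ p - c`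
stays irreducible over `F` and the quotient is a field.
-/

open scoped TensorProduct
open Polynomial

theorem isField_of_surjective_of_isMaximal_le_ker {R A : Type*} [CommRing R] [CommRing A]
    [Nontrivial A] (f : R →+* A) (hf : Function.Surjective f) {I : Ideal R} (hI : I.IsMaximal)
    (hle : I ≤ RingHom.ker f) : IsField A := by
  have hker : (RingHom.ker f).IsMaximal := hI.eq_of_le (RingHom.ker_ne_top f) hle ▸ hI
  exact (RingHom.quotientKerEquivOfSurjective hf).symm.toMulEquiv.isField
    ((Ideal.Quotient.maximal_ideal_iff_isField_quotient _).1 hker)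

theorem isField_tensorProduct_of_irreducible_map_minpoly {k F K : Type*} [Field k] [Field F]
    [Field K] [Algebra k F] [Algebra k K] {y : K} (hy : Algebra.adjoin k {y} = ⊤)
    (hirr : Irreducible ((minpoly k y).map (algebraMap k F))) : IsField (F ⊗[k] K) := by
  let φ : F[X] →ₐ[F] F ⊗[k] K := aeval ((1 : F) ⊗ₜ[k] y)
  have hsurj : Function.Surjective φ := by
    rw [← AlgHom.range_eq_top, ← Algebra.adjoin_singleton_eq_range_aeval, ← Set.image_singleton]
    exact Algebra.TensorProduct.adjoin_one_tmul_image_eq_top _ hy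
  have hroot : φ ((minpoly k y).map (algebraMap k F)) = 0 := by
    rw [aeval_map_algebraMap, ← Algebra.TensorProduct.includeRight_apply, aeval_algHom_apply,
      minpoly.aeval, map_zero]
  refine isField_of_surjective_of_isMaximal_le_ker φ.toRingHom hsurj
    (PrincipalIdealRing.isMaximal_of_irreducible hirr) (Ideal.span_le.2 ?_)
  exact Set.singleton_subset_iff.2 hroot

theorem IsPurelyInseparable.exists_minpoly_eq_X_pow_sub_C_of_finrank_eq {k K : Type*} [Field k]
    [Field K] [Algebra k K] (p : ℕ) [ExpChar k p] [IsPurelyInseparable k K]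
    (hp : p.Prime) (hdeg : Module.finrank k K = p) :
    ∃ y : K, Algebra.adjoin k {y} = ⊤ ∧ ∃ c : k, minpoly k y = X ^ p - C c := by
  have : FiniteDimensional k K := Module.finite_of_finrank_pos (hdeg ▸ hp.pos)
  have := IntermediateField.isSimpleOrder_of_finrank_prime k K (hdeg ▸ hp)
  obtain ⟨y, -, hy⟩ := SetLike.exists_of_lt (bot_lt_top : (⊥ : IntermediateField k K) < ⊤)
  have htop : IntermediateField.adjoin k {y} = ⊤ :=
    (eq_bot_or_eq_top _).resolve_left fun h ↦ hy (h ▸ IntermediateField.mem_adjoin_simple_self k y)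
  have hint : IsIntegral k y := .of_finite k y
  obtain ⟨n, c, hmin⟩ := IsPurelyInseparable.minpoly_eq_X_pow_sub_C k p y
  have hn : p ^ n = p := by
    rw [← natDegree_X_pow_sub_C (n := p ^ n) (r := c), ← hmin,
      ← IntermediateField.adjoin.finrank hint, htop, IntermediateField.finrank_top', hdeg]
  refine ⟨y, (IntermediateField.adjoin_simple_eq_top_iff_of_isAlgebraic hint.isAlgebraic).1 htop,
    c, ?_⟩
  rwa [hn] at hmin

/-- Let `k` be a field of characteristic `p > 0`, let `F/k` be a field extension in which `k`
is purely inseparably closed (every `x ∈ F` with `x ^ p ∈ k` lies in `k`), and let `k'/k` be a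
purely inseparable field extension of degree `p`. Then `F ⊗[k] k'` is a field. -/
theorem stmt0 (p : ℕ) [Fact p.Prime] (k F k' : Type*) [Field k] [Field F] [Field k']
    [Algebra k F] [Algebra k k'] [CharP k p]
    (hclosed : ∀ x : F, x ^ p ∈ (algebraMap k F).range → x ∈ (algebraMap k F).range)
    [IsPurelyInseparable k k'] (hdeg : Module.finrank k k' = p) :
    IsField (F ⊗[k] k') := by
  have hp : p.Prime := Fact.out
  obtain ⟨y, hy, c, hmin⟩ :=
    IsPurelyInseparable.exists_minpoly_eq_X_pow_sub_C_of_finrank_eq p hp hdeg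
  have hc : ∀ a : k, a ^ p ≠ c := (X_pow_sub_C_irreducible_iff_of_prime hp).1
    (hmin ▸ minpoly.irreducible (Algebra.IsIntegral.isIntegral y))
  refine isField_tensorProduct_of_irreducible_map_minpoly hy ?_
  rw [hmin, Polynomial.map_sub, Polynomial.map_pow, map_X, map_C]
  refine X_pow_sub_C_irreducible_of_prime hp fun b hb ↦ ?_
  obtain ⟨a, rfl⟩ := hclosed b ⟨c, hb.symm⟩
  exact hc a ((algebraMap k F).injective (by rw [map_pow, hb]))
end

section
/- Let $k$ be a field, let $F$ be a field extension of $k$ that is finitely generated as a field over $k$, and let $A$ be a Noetherian $k$-algebra. Then the ring $F \otimes_k A$ is Noetherian. -/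
open scoped TensorProduct

theorem isNoetherianRing_tensorProduct_of_essFiniteType (R S A : Type*) [CommRing R]
    [CommRing S] [Algebra R S] [Algebra.EssFiniteType R S]
    [CommRing A] [Algebra R A] [IsNoetherianRing A] :
    IsNoetherianRing (S ⊗[R] A) :=
  have : IsNoetherianRing (A ⊗[R] S) := Algebra.EssFiniteType.isNoetherianRing A _
  isNoetherianRing_of_ringEquiv _ (Algebra.TensorProduct.comm R A S).toRingEquiv

/-- Let `k` be a field, `F` a field extension of `k` that is finitely generated as a field
over `k`, and `A` an arbitrary Noetherian `k`-algebra. Then `F ⊗[k] A` is Noetherian. -/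
theorem stmt2 (k F A : Type*) [Field k] [Field F] [Algebra k F]
    (hfg : ∃ s : Finset F, IntermediateField.adjoin k (s : Set F) = ⊤)
    [CommRing A] [Algebra k A] [IsNoetherianRing A] :
    IsNoetherianRing (F ⊗[k] A) :=
  have : Algebra.EssFiniteType k F := IntermediateField.fg_top_iff.mp hfg
  isNoetherianRing_tensorProduct_of_essFiniteType k F A
end

section
/- Let $k$ be a field of characteristic $p > 0$ and $A$ a $k$-algebra. If $k_1/k$ is a finite purely inseparable field extension such that the ideal of $A \otimes_k k^{p^{-\infty}}$ generated by the image of $\mathrm{Nil}(A \otimes_k k_1)$ equals $\mathrm{Nil}(A \otimes_k k^{p^{-\infty}})$, then there is a ring isomorphism $(A \otimes_k k_1)_{\mathrm{red}} \otimes_{k_1} k^{p^{-\infty}} \cong (A \otimes_k k^{p^{-\infty}})_{\mathrm{red}}$. -/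
/-! By right-exactness of `K ⊗[k₁] -`, base change of `(k₁ ⊗[k] A) ⧸ I` is the quotient of
`K ⊗[k₁] (k₁ ⊗[k] A) ≅ K ⊗[k] A` by the extension of `I`. For `I = Nil(k₁ ⊗[k] A)` that extension is
`Nil(K ⊗[k] A)` by hypothesis. -/

open scoped TensorProduct

namespace Algebra.TensorProduct

variable {R S T B : Type*} [CommRing R] [CommRing S] [CommRing T] [CommRing B]
  [Algebra R S] [Algebra R T] [Algebra S T] [IsScalarTower R S T] [Algebra R B]

lemma cancelBaseChange_one_tmul (x : S ⊗[R] B) :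
    cancelBaseChange R S T T B (1 ⊗ₜ x) =
      map (IsScalarTower.toAlgHom R S T) (AlgHom.id R B) x := by
  induction x with
  | zero => simp
  | add x y hx hy => rw [TensorProduct.tmul_add, map_add, map_add, hx, hy]
  | tmul s b => simp [Algebra.smul_def]

lemma map_includeRight_map_cancelBaseChange (I : Ideal (S ⊗[R] B)) :
    (I.map (includeRight : S ⊗[R] B →ₐ[S] T ⊗[S] (S ⊗[R] B))).map
        (cancelBaseChange R S T T B : T ⊗[S] (S ⊗[R] B) →+* T ⊗[R] B) =
      I.map (map (IsScalarTower.toAlgHom R S T) (AlgHom.id R B)) := by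
  rw [← Ideal.map_coe (includeRight : S ⊗[R] B →ₐ[S] T ⊗[S] (S ⊗[R] B)), Ideal.map_map]
  exact congrArg (I.map ·) (RingHom.ext cancelBaseChange_one_tmul)

variable (T) in
noncomputable def baseChangeQuotientEquiv (I : Ideal (S ⊗[R] B)) :
    T ⊗[S] ((S ⊗[R] B) ⧸ I) ≃ₐ[T]
      (T ⊗[R] B) ⧸ I.map (map (IsScalarTower.toAlgHom R S T) (AlgHom.id R B)) :=
  (tensorQuotientEquiv T (S ⊗[R] B) T I).trans <|
    Ideal.quotientEquivAlg _ _ (cancelBaseChange R S T T B)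
      (map_includeRight_map_cancelBaseChange I).symm

end Algebra.TensorProduct

theorem stmt7_general (k k₁ K A : Type) [Field k] [Field k₁] [Field K]
    [CommRing A] [Algebra k k₁] [Algebra k K] [Algebra k₁ K] [IsScalarTower k k₁ K]
    [Algebra k A]
    (h : Ideal.map
          (Algebra.TensorProduct.map (IsScalarTower.toAlgHom k k₁ K) (AlgHom.id k A)).toRingHom
          (nilradical (k₁ ⊗[k] A))
        = nilradical (K ⊗[k] A)) :
    Nonempty ((K ⊗[k₁] ((k₁ ⊗[k] A) ⧸ nilradical (k₁ ⊗[k] A)))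
      ≃+* ((K ⊗[k] A) ⧸ nilradical (K ⊗[k] A))) :=
  ⟨(Algebra.TensorProduct.baseChangeQuotientEquiv K (nilradical (k₁ ⊗[k] A))).toRingEquiv.trans
    (Ideal.quotEquivOfEq h)⟩

/-- Let `k` be a field of characteristic `p > 0`, `A` a `k`-algebra, `k₁/k` a finite purely
inseparable field extension, and `K` the perfect closure of `k` (a perfect field, purely
inseparable over `k`, containing `k₁`). If the ideal of `K ⊗[k] A` generated by the image of
`Nil(k₁ ⊗[k] A)` equals `Nil(K ⊗[k] A)`, then
`K ⊗[k₁] ((k₁ ⊗[k] A)_red) ≅ (K ⊗[k] A)_red`. -/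
theorem stmt7 (p : ℕ) [Fact p.Prime] (k k₁ K A : Type) [Field k] [Field k₁] [Field K]
    [CommRing A] [Algebra k k₁] [Algebra k K] [Algebra k₁ K] [IsScalarTower k k₁ K]
    [Algebra k A] [CharP k p] [ExpChar K p] [PerfectRing K p] [IsPurelyInseparable k K]
    [FiniteDimensional k k₁] [IsPurelyInseparable k k₁]
    (h : Ideal.map
          (Algebra.TensorProduct.map (IsScalarTower.toAlgHom k k₁ K) (AlgHom.id k A)).toRingHom
          (nilradical (k₁ ⊗[k] A))
        = nilradical (K ⊗[k] A)) :
    Nonempty ((K ⊗[k₁] ((k₁ ⊗[k] A) ⧸ nilradical (k₁ ⊗[k] A)))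
      ≃+* ((K ⊗[k] A) ⧸ nilradical (K ⊗[k] A))) :=
  stmt7_general k k₁ K A h
end

section
/- Let $k$ be a field of characteristic $p>0$, and let $F$ be a finitely generated field extension of $k$. Then the nilradical of the (Noetherian) ring $F \otimes_k k^{p^{-\infty}}$ is finitely generated, and consequently there exists a finite purely inseparable subextension $k \subset k_1 \subset k^{p^{-\infty}}$ such that $\mathrm{Nil}(F \otimes_k k_1)$ generates $\mathrm{Nil}(F \otimes_k k^{p^{-\infty}})$ as an ideal. -/
open scoped TensorProduct

set_option synthInstance.maxHeartbeats 1000000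
set_option maxHeartbeats 1000000

/-- A finite purely inseparable subextension `k ⊆ k₁ ⊆ K` (of the perfect closure `K` of `k`)
such that `Nil(k₁ ⊗[k] F)` generates `Nil(K ⊗[k] F)` as an ideal. -/
structure NilGenWitness (k F K : Type) [Field k] [Field F] [Field K]
    [Algebra k F] [Algebra k K] : Type 1 where
  k₁ : Type
  [field_k₁ : Field k₁]
  [alg_k_k₁ : Algebra k k₁]
  [alg_k₁_K : Algebra k₁ K]
  [tower : IsScalarTower k k₁ K]
  findim : FiniteDimensional k k₁
  pins : IsPurelyInseparable k k₁
  gen : Ideal.map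
      (Algebra.TensorProduct.map (IsScalarTower.toAlgHom k k₁ K) (AlgHom.id k F)).toRingHom
      (nilradical (k₁ ⊗[k] F))
    = nilradical (K ⊗[k] F)

/-!
Since `F` is a localization of a finitely generated `k`-algebra, `K ⊗[k] F` is a localization of
a finitely generated `K`-algebra, hence Noetherian, and its nilradical is spanned by finitely many
elements. Their coefficients in `K` generate a finite (purely inseparable) subextension `k₁`, so
they come from `k₁ ⊗[k] F`; as `k₁ ⊗[k] F → K ⊗[k] F` is injective, they are already nilpotent
there.
-/

theorem Ideal.map_nilradical_eq_of_injective {R S : Type*} [CommRing R] [CommRing S]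
    {f : R →+* S} (hf : Function.Injective f) {T : Set S} (hTf : T ⊆ Set.range f)
    (hT : Ideal.span T = nilradical S) : (nilradical R).map f = nilradical S := by
  refine le_antisymm (Ideal.map_le_iff_le_comap.mpr fun r hr ↦ ?_) ?_
  · exact mem_nilradical.mpr ((mem_nilradical.mp hr).map f)
  rw [← hT, Ideal.span_le]
  intro t ht
  obtain ⟨r, rfl⟩ := hTf ht
  have hnil : IsNilpotent (f r) := mem_nilradical.mp (hT ▸ Ideal.subset_span ht)
  exact Ideal.mem_map_of_mem f (mem_nilradical.mpr ((IsNilpotent.map_iff hf).mp hnil))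

theorem IntermediateField.exists_finiteDimensional_subset_range_tensorProductMap
    {k K A : Type*} [Field k] [Field K] [Algebra k K] [Algebra.IsAlgebraic k K]
    [Ring A] [Algebra k A] (s : Set (K ⊗[k] A)) (hs : s.Finite) :
    ∃ k₁ : IntermediateField k K, FiniteDimensional k k₁ ∧
      s ⊆ Set.range (Algebra.TensorProduct.map k₁.val (AlgHom.id k A)) := by
  obtain ⟨_, ⟨S, rfl⟩, hsJ⟩ := Submodule.exists_fg_le_subset_range_rTensor_subtype s hs
  refine ⟨adjoin k S, finiteDimensional_adjoin fun x _ ↦ Algebra.IsIntegral.isIntegral x, ?_⟩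
  have hle : Submodule.span k (S : Set K) ≤ (adjoin k (S : Set K)).toSubalgebra.toSubmodule :=
    Submodule.span_le.mpr (subset_adjoin k _)
  rintro _ hx
  obtain ⟨y, rfl⟩ := hsJ hx
  refine ⟨LinearMap.rTensor A (Submodule.inclusion hle) y, ?_⟩
  change LinearMap.rTensor A (adjoin k (S : Set K)).val.toLinearMap _ = _
  rw [← LinearMap.rTensor_comp_apply]
  rfl

theorem stmt8_general (k F K : Type) [Field k] [Field F] [Field K]
    [Algebra k F] [Algebra k K] [IsPurelyInseparable k K]
    (hfg : ∃ s : Finset F, IntermediateField.adjoin k (s : Set F) = ⊤) :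
    (nilradical (K ⊗[k] F)).FG ∧ Nonempty (NilGenWitness k F K) := by
  have : Algebra.EssFiniteType k F := IntermediateField.fg_top_iff.mp hfg
  have hFG : (nilradical (K ⊗[k] F)).FG :=
    (Algebra.EssFiniteType.isNoetherianRing K (K ⊗[k] F)).noetherian _
  refine ⟨hFG, ?_⟩
  obtain ⟨T, hT⟩ := hFG
  obtain ⟨k₁, hk₁, hTk₁⟩ :=
    IntermediateField.exists_finiteDimensional_subset_range_tensorProductMap _ T.finite_toSet
  exact ⟨{ k₁ := k₁, findim := hk₁, pins := inferInstance
           gen := Ideal.map_nilradical_eq_of_injective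
             (Module.Flat.rTensor_preserves_injective_linearMap _ k₁.val.injective) hTk₁ hT }⟩

/-- Let `k` be a field of characteristic `p > 0` and `F` a finitely generated field extension
of `k`, and let `K` be the perfect closure of `k`. Then the nilradical of the (Noetherian) ring
`K ⊗[k] F` is finitely generated, and consequently there is a finite purely inseparable
subextension `k ⊆ k₁ ⊆ K` such that `Nil(k₁ ⊗[k] F)` generates `Nil(K ⊗[k] F)`. -/
theorem stmt8 (p : ℕ) [Fact p.Prime] (k F K : Type) [Field k] [Field F] [Field K]
    [Algebra k F] [Algebra k K] [CharP k p]
    [ExpChar K p] [PerfectRing K p] [IsPurelyInseparable k K]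
    (hfg : ∃ s : Finset F, IntermediateField.adjoin k (s : Set F) = ⊤) :
    (nilradical (K ⊗[k] F)).FG ∧ Nonempty (NilGenWitness k F K) :=
  stmt8_general k F K hfg
end
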